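/- For every θ with 0 < θ < √d, the derivative of m satisfies m'(θ) ≤ (1+θ²/d)/(1−θ²/d)² · (1 − (2p−1)²/2). -/

import Mathlib

open MeasureTheory Real Set
open scoped ENNReal

noncomputable section

namespace OMDA

/-- `t_p(x)`. -/
def tp (p x : ℝ) : ℝ :=
  (p * Real.exp x - (1 - p) * Real.exp (-x)) / (p * Real.exp x + (1 - p) * Real.exp (-x))

/-- `c_p(x)`. -/
def cp (p x : ℝ) : ℝ := p * Real.exp x + (1 - p) * Real.exp (-x)

/-- The standard normal density on `ℝ`. -/
def phi1 (z : ℝ) : ℝ := Real.exp (-z ^ 2 / 2) / Real.sqrt (2 * π)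

/-- Expectation of `g Z` for `Z ∼ N(0,1)`. -/
def gexp (g : ℝ → ℝ) : ℝ := ∫ z : ℝ, g z * phi1 z

/-- The univariate population EM map `m(θ)`. -/
def m (p : ℝ) (d : ℕ) (θ : ℝ) : ℝ :=
  gexp fun z => tp p (θ * z / (1 - θ ^ 2 / d)) * z

/-- The radial negative population log-likelihood `ℓ(θ)`. -/
def ell (p : ℝ) (d : ℕ) (θ : ℝ) : ℝ :=
  (d / 2 : ℝ) * Real.log (2 * π * (1 - θ ^ 2 / d)) + ((d : ℝ) + θ ^ 2) / (2 * (1 - θ ^ 2 / d))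
    - gexp fun z => Real.log (cp p (θ * z / (1 - θ ^ 2 / d)))

/-- `q := 1 - (2p-1)²/2`. -/
def qp (p : ℝ) : ℝ := 1 - (2 * p - 1) ^ 2 / 2

/-- The initialization radius `√(d·(2+q−√(8q+q²))/2)`. -/
def θmax (p : ℝ) (d : ℕ) : ℝ :=
  Real.sqrt ((d : ℝ) * (2 + qp p - Real.sqrt (8 * qp p + qp p ^ 2)) / 2)

/-- `ρ := (1+θ₀²/d)/(1−θ₀²/d)² · (1 − (2p−1)²/2)`. -/
def ρc (p : ℝ) (d : ℕ) (θ0 : ℝ) : ℝ :=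
  (1 + θ0 ^ 2 / d) / (1 - θ0 ^ 2 / d) ^ 2 * (1 - (2 * p - 1) ^ 2 / 2)

/-- `ℝᵈ` with the Euclidean norm. -/
abbrev E (d : ℕ) := EuclideanSpace ℝ (Fin d)

/-- Density of `N(ν, σ²·I_d)` on `ℝᵈ`. -/
def gpdf (d : ℕ) (ν : E d) (σ2 : ℝ) (x : E d) : ℝ :=
  (2 * π * σ2) ^ (-(d : ℝ) / 2) * Real.exp (-‖x - ν‖ ^ 2 / (2 * σ2))

/-- Density of the mixture `(1−p)·N(ν−θ, σ²I) + p·N(ν+θ, σ²I)`. -/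
def mixPdf (p : ℝ) (d : ℕ) (ν θ : E d) (σ2 : ℝ) (x : E d) : ℝ :=
  (1 - p) * gpdf d (ν - θ) σ2 x + p * gpdf d (ν + θ) σ2 x

/-- The population EM operator `M(θ)`. -/
def Mop (p : ℝ) (d : ℕ) (θ : E d) : E d :=
  ∫ z : E d, (gpdf d 0 1 z * tp p ((inner ℝ θ z : ℝ) / (1 - ‖θ‖ ^ 2 / d))) • z

/-- KL divergence `D_KL[N(0,I_d) ∥ G(θ, σ²)]`, written via densities. -/
def klStd (p : ℝ) (d : ℕ) (θ : E d) (σ2 : ℝ) : ℝ :=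
  ∫ z : E d, gpdf d 0 1 z * Real.log (gpdf d 0 1 z / mixPdf p d 0 θ σ2 z)

/-- The standard normal cdf `Φ`. -/
def stdNormCdf (x : ℝ) : ℝ := ∫ z in Iic x, phi1 z

/-- Misclassification probability of a classifier `h` under the distribution `D`
with class-conditional laws `N(±μ, I_d)` and balanced classes. -/
def errProb (d : ℕ) (μ : E d) (h : E d → ℝ) : ℝ :=
  (1 / 2) * (∫ x in {x | h x ≠ 1}, gpdf d μ 1 x)
    + (1 / 2) * (∫ x in {x | h x ≠ -1}, gpdf d (-μ) 1 x)

/-- The measure `N(ν, I_d)` on `ℝᵈ`, via its density. -/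
def gaussMeasure (d : ℕ) (ν : E d) : Measure (E d) :=
  volume.withDensity fun x => ENNReal.ofReal (gpdf d ν 1 x)

/-- The standard Gaussian measure `N(0, I_d)`. -/
def stdGaussMeasure (d : ℕ) : Measure (E d) := gaussMeasure d 0

/-- The joint distribution `D` of `(X, Y)` on `ℝᵈ × ℝ`. -/
def Dmeas (d : ℕ) (μ : E d) : Measure (E d × ℝ) :=
  (1 / 2 : ℝ≥0∞) • ((gaussMeasure d μ).prod (Measure.dirac (1 : ℝ)))
    + (1 / 2 : ℝ≥0∞) • ((gaussMeasure d (-μ)).prod (Measure.dirac (-1 : ℝ)))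

/-- Chi-squared measure with `k` degrees of freedom. -/
def chiSqMeasure (k : ℕ) : Measure ℝ := ProbabilityTheory.gammaMeasure ((k : ℝ) / 2) (1 / 2)


section AuxProof

variable {p : ℝ}

lemma cpden_pos (hp0 : 0 < p) (hp1 : p < 1) (x : ℝ) :
    0 < p * Real.exp x + (1 - p) * Real.exp (-x) :=
  add_pos (mul_pos hp0 (Real.exp_pos x)) (mul_pos (by linarith) (Real.exp_pos _))

lemma tp_sq_le_one (hp0 : 0 < p) (hp1 : p < 1) (x : ℝ) : tp p x ^ 2 ≤ 1 := by
  have hD := cpden_pos hp0 hp1 x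
  have h1 := Real.exp_pos x; have h2 := Real.exp_pos (-x)
  rw [tp, div_pow, div_le_one (by positivity)]
  nlinarith [mul_pos (mul_pos hp0 h1) (mul_pos (by linarith : (0:ℝ) < 1 - p) h2)]

lemma hasDerivAt_tp (hp0 : 0 < p) (hp1 : p < 1) (x : ℝ) :
    HasDerivAt (tp p) (1 - tp p x ^ 2) x := by
  have hD := cpden_pos hp0 hp1 x
  have he : HasDerivAt (fun y : ℝ => Real.exp (-y)) (-Real.exp (-x)) x := by
    exact ((Real.hasDerivAt_exp (-x)).comp x (hasDerivAt_neg x)).congr_deriv (by simp)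
  have hN : HasDerivAt (fun y => p * Real.exp y - (1 - p) * Real.exp (-y))
      (p * Real.exp x + (1 - p) * Real.exp (-x)) x := by
    have := ((Real.hasDerivAt_exp x).const_mul p).sub (he.const_mul (1 - p))
    exact this.congr_deriv (by ring)
  have hDd : HasDerivAt (fun y => p * Real.exp y + (1 - p) * Real.exp (-y))
      (p * Real.exp x - (1 - p) * Real.exp (-x)) x := by
    have := ((Real.hasDerivAt_exp x).const_mul p).add (he.const_mul (1 - p))
    exact this.congr_deriv (by ring)
  have h := hN.div hDd (ne_of_gt hD)
  refine h.congr_deriv ?_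
  rw [tp]; field_simp

lemma tp_zero (hp0 : 0 < p) (hp1 : p < 1) : tp p 0 = 2 * p - 1 := by
  rw [tp]
  simp only [neg_zero, Real.exp_zero, mul_one]
  rw [show p + (1 - p) = (1:ℝ) by ring, div_one]; ring

lemma tp_mono (hp0 : 0 < p) (hp1 : p < 1) : Monotone (tp p) := by
  have h : ∀ x, HasDerivAt (tp p) (1 - tp p x ^ 2) x := hasDerivAt_tp hp0 hp1
  apply monotone_of_deriv_nonneg (fun x => (h x).differentiableAt)
  intro x; rw [(h x).deriv]
  nlinarith [tp_sq_le_one hp0 hp1 x]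

lemma continuous_tp (hp0 : 0 < p) (hp1 : p < 1) : Continuous (tp p) :=
  continuous_iff_continuousAt.2 fun x => (hasDerivAt_tp hp0 hp1 x).differentiableAt.continuousAt

lemma continuous_phi1 : Continuous phi1 := by
  unfold phi1; fun_prop

lemma phi1_pos (z : ℝ) : 0 < phi1 z := by
  rw [phi1]
  have : 0 < Real.sqrt (2 * π) := Real.sqrt_pos.2 (by positivity)
  positivity

lemma integrable_exp_half : Integrable (fun z : ℝ => Real.exp (-z ^ 2 / 2)) := by
  have h := integrable_exp_neg_mul_sq (b := (1/2:ℝ)) one_half_pos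
  refine h.congr ?_
  filter_upwards with z; congr 1; ring

lemma integrable_sq_exp_half : Integrable (fun z : ℝ => z ^ 2 * Real.exp (-z ^ 2 / 2)) := by
  have h := integrable_rpow_mul_exp_neg_mul_sq (b := (1/2:ℝ)) one_half_pos
    (s := 2) (by norm_num)
  refine h.congr ?_
  filter_upwards with z
  rw [show ((2:ℝ)) = ((2:ℕ):ℝ) by norm_num, Real.rpow_natCast]
  congr 1; ring

lemma integrable_sq_phi : Integrable (fun z : ℝ => z ^ 2 * phi1 z) := by
  have h := integrable_sq_exp_half.div_const (Real.sqrt (2 * π))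
  refine h.congr ?_
  filter_upwards with z
  rw [phi1]; ring

lemma integrable_phi : Integrable phi1 := by
  have h := integrable_exp_half.div_const (Real.sqrt (2 * π))
  exact h.congr (by filter_upwards with z; rw [phi1])

lemma tendsto_aux : Filter.Tendsto (fun z : ℝ => -z * Real.exp (-z ^ 2 / 2))
    Filter.atTop (nhds 0) := by
  apply squeeze_zero_norm' (a := fun z : ℝ => z * Real.exp (-z)) ?_ ?_
  · filter_upwards [Filter.eventually_ge_atTop (2:ℝ)] with z hz
    have h2 : -z ^ 2 / 2 ≤ -z := by nlinarith
    have : Real.exp (-z ^ 2 / 2) ≤ Real.exp (-z) := Real.exp_le_exp.2 h2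
    rw [norm_mul, norm_neg, Real.norm_eq_abs, Real.norm_eq_abs,
      abs_of_nonneg (by linarith : (0:ℝ) ≤ z), abs_of_nonneg (Real.exp_pos _).le]
    exact mul_le_mul_of_nonneg_left this (by linarith)
  · simpa using tendsto_pow_mul_exp_neg_atTop_nhds_zero 1

lemma integral_Ioi_parts : ∫ z in Ioi (0:ℝ), (z ^ 2 - 1) * Real.exp (-z ^ 2 / 2) = 0 := by
  have hderiv : ∀ x ∈ Ici (0:ℝ), HasDerivAt (fun z : ℝ => -z * Real.exp (-z ^ 2 / 2))
      ((x ^ 2 - 1) * Real.exp (-x ^ 2 / 2)) x := by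
    intro x _
    have he : HasDerivAt (fun z : ℝ => Real.exp (-z ^ 2 / 2))
        (Real.exp (-x ^ 2 / 2) * (-(2 * x) / 2)) x := by
      have hinner : HasDerivAt (fun z : ℝ => -z ^ 2 / 2) (-(2 * x) / 2) x := by
        have := (hasDerivAt_pow 2 x).neg.div_const 2
        simpa using this
      exact (Real.hasDerivAt_exp _).comp x hinner
    have := (hasDerivAt_neg x).mul he
    exact this.congr_deriv (by ring)
  have hint : IntegrableOn (fun z : ℝ => (z ^ 2 - 1) * Real.exp (-z ^ 2 / 2)) (Ioi 0) := by
    apply Integrable.integrableOn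
    have := integrable_sq_exp_half.sub integrable_exp_half
    refine this.congr ?_
    filter_upwards with z; simp only [Pi.sub_apply]; ring
  have := integral_Ioi_of_hasDerivAt_of_tendsto' hderiv hint tendsto_aux
  simpa using this

lemma integral_Ioi_sq_exp : ∫ z in Ioi (0:ℝ), z ^ 2 * Real.exp (-z ^ 2 / 2)
    = Real.sqrt (2 * π) / 2 := by
  have h1 : ∫ z in Ioi (0:ℝ), Real.exp (-z ^ 2 / 2) = Real.sqrt (2 * π) / 2 := by
    have := integral_gaussian_Ioi (1/2)
    rw [show π / (1/2) = 2 * π by ring] at this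
    rw [← this]
    apply setIntegral_congr_fun measurableSet_Ioi
    intro z _; show Real.exp _ = Real.exp _; rw [show -z ^ 2 / 2 = -(1/2) * z ^ 2 by ring]
  have h2 : ∀ z : ℝ, z ^ 2 * Real.exp (-z ^ 2 / 2)
      = (z ^ 2 - 1) * Real.exp (-z ^ 2 / 2) + Real.exp (-z ^ 2 / 2) := fun z => by ring
  have hi1 : IntegrableOn (fun z : ℝ => (z ^ 2 - 1) * Real.exp (-z ^ 2 / 2)) (Ioi 0) :=
    ((integrable_sq_exp_half.sub integrable_exp_half).congr
      (by filter_upwards with z; simp only [Pi.sub_apply]; ring)).integrableOn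
  have hi2 : IntegrableOn (fun z : ℝ => Real.exp (-z ^ 2 / 2)) (Ioi 0) :=
    integrable_exp_half.integrableOn
  have hadd := integral_add hi1 hi2
  have hcg : (∫ z in Ioi (0:ℝ), z ^ 2 * Real.exp (-z ^ 2 / 2))
      = ∫ z in Ioi (0:ℝ), ((z ^ 2 - 1) * Real.exp (-z ^ 2 / 2) + Real.exp (-z ^ 2 / 2)) :=
    setIntegral_congr_fun measurableSet_Ioi (fun z _ => h2 z)
  rw [hcg, hadd, integral_Ioi_parts, h1, zero_add]

lemma integral_Ioi_sq_phi : ∫ z in Ioi (0:ℝ), z ^ 2 * phi1 z = 1 / 2 := by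
  have hs : (0:ℝ) < Real.sqrt (2 * π) := Real.sqrt_pos.2 (by positivity)
  have : ∀ z : ℝ, z ^ 2 * phi1 z = (z ^ 2 * Real.exp (-z ^ 2 / 2)) / Real.sqrt (2 * π) :=
    fun z => by rw [phi1]; ring
  rw [setIntegral_congr_fun measurableSet_Ioi (fun z _ => this z), integral_div,
    integral_Ioi_sq_exp]
  rw [div_right_comm, div_self (ne_of_gt hs)]

lemma integral_sq_phi : ∫ z : ℝ, z ^ 2 * phi1 z = 1 := by
  have heven : ∀ z : ℝ, (-z) ^ 2 * phi1 (-z) = z ^ 2 * phi1 z := by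
    intro z; rw [phi1, phi1]; ring_nf
  have hIic : ∫ z in Iic (0:ℝ), z ^ 2 * phi1 z = 1 / 2 := by
    rw [← neg_zero, ← integral_comp_neg_Ioi]
    rw [setIntegral_congr_fun measurableSet_Ioi (fun z _ => heven z)]
    exact integral_Ioi_sq_phi
  rw [← intervalIntegral.integral_Iic_add_Ioi (b := (0:ℝ)) integrable_sq_phi.integrableOn
    integrable_sq_phi.integrableOn, hIic, integral_Ioi_sq_phi]
  norm_num

lemma tp_le_one_abs (hp0 : 0 < p) (hp1 : p < 1) (x : ℝ) : |tp p x| ≤ 1 := by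
  have := tp_sq_le_one hp0 hp1 x
  nlinarith [abs_nonneg (tp p x), sq_abs (tp p x)]

lemma integrable_F (hp0 : 0 < p) (hp1 : p < 1) (a : ℝ) :
    Integrable (fun z : ℝ => tp p (a * z) * z * phi1 z) := by
  have hbi : Integrable (fun z : ℝ => (1 + z ^ 2) * phi1 z) := by
    refine (integrable_phi.add integrable_sq_phi).congr ?_
    filter_upwards with z; simp only [Pi.add_apply]; ring
  refine hbi.mono ?_ ?_
  · have hc : Continuous fun z : ℝ => tp p (a * z) :=
      (continuous_tp hp0 hp1).comp (by fun_prop)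
    exact ((hc.mul continuous_id).mul continuous_phi1).aestronglyMeasurable
  · filter_upwards with z
    have hφ := (phi1_pos z).le
    rw [Real.norm_eq_abs, Real.norm_eq_abs, abs_mul, abs_mul, abs_of_nonneg hφ,
      abs_of_nonneg (by nlinarith [sq_nonneg z] : (0:ℝ) ≤ (1 + z ^ 2) * phi1 z)]
    have h1 : |tp p (a * z)| * |z| ≤ 1 * |z| :=
      mul_le_mul_of_nonneg_right (tp_le_one_abs hp0 hp1 _) (abs_nonneg z)
    have h2 : |z| ≤ 1 + z ^ 2 := by nlinarith [abs_nonneg z, sq_abs z, sq_nonneg (|z| - 1)]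
    calc |tp p (a * z)| * |z| * phi1 z ≤ (1 * |z|) * phi1 z :=
          mul_le_mul_of_nonneg_right h1 hφ
      _ ≤ (1 + z ^ 2) * phi1 z := by
          rw [one_mul]; exact mul_le_mul_of_nonneg_right h2 hφ

lemma hasDerivAt_F (hp0 : 0 < p) (hp1 : p < 1) (a : ℝ) :
    HasDerivAt (fun a : ℝ => ∫ z : ℝ, tp p (a * z) * z * phi1 z)
      (∫ z : ℝ, (1 - tp p (a * z) ^ 2) * z ^ 2 * phi1 z) a := by
  have key := hasDerivAt_integral_of_dominated_loc_of_deriv_le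
    (F := fun (a : ℝ) (z : ℝ) => tp p (a * z) * z * phi1 z)
    (F' := fun (a : ℝ) (z : ℝ) => (1 - tp p (a * z) ^ 2) * z ^ 2 * phi1 z)
    (bound := fun z : ℝ => z ^ 2 * phi1 z) (x₀ := a) (s := Metric.ball a 1) (Metric.ball_mem_nhds a one_pos)
    ?_ (integrable_F hp0 hp1 a) ?_ ?_ integrable_sq_phi ?_
  · exact key.2
  · filter_upwards with x
    have hc : Continuous fun z : ℝ => tp p (x * z) :=
      (continuous_tp hp0 hp1).comp (by fun_prop)
    exact ((hc.mul continuous_id).mul continuous_phi1).aestronglyMeasurable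
  · have hc : Continuous fun z : ℝ => tp p (a * z) :=
      (continuous_tp hp0 hp1).comp (by fun_prop)
    exact (((continuous_const.sub (hc.pow 2)).mul (continuous_pow 2)).mul
      continuous_phi1).aestronglyMeasurable
  · filter_upwards with z
    intro x _
    have h1 := tp_sq_le_one hp0 hp1 (x * z)
    have hφ := (phi1_pos z).le
    have hn : (0:ℝ) ≤ 1 - tp p (x * z) ^ 2 := by nlinarith [sq_nonneg (tp p (x*z))]
    rw [Real.norm_eq_abs, abs_of_nonneg (mul_nonneg (mul_nonneg hn (sq_nonneg z)) hφ)]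
    have : (1 - tp p (x * z) ^ 2) * z ^ 2 ≤ 1 * z ^ 2 :=
      mul_le_mul_of_nonneg_right (by linarith [sq_nonneg (tp p (x * z))]) (sq_nonneg z)
    calc (1 - tp p (x * z) ^ 2) * z ^ 2 * phi1 z ≤ (1 * z ^ 2) * phi1 z :=
        mul_le_mul_of_nonneg_right this hφ
      _ = z ^ 2 * phi1 z := by ring
  · filter_upwards with z
    intro x _
    have hi : HasDerivAt (fun x : ℝ => x * z) z x := hasDerivAt_mul_const z
    have := ((hasDerivAt_tp hp0 hp1 (x * z)).comp x hi).mul_const z |>.mul_const (phi1 z)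
    exact this.congr_deriv (by ring)

lemma Fderiv_le (hp : p ∈ Set.Ioo (1 / 2 : ℝ) 1) {a : ℝ} (ha : 0 < a) :
    (∫ z : ℝ, (1 - tp p (a * z) ^ 2) * z ^ 2 * phi1 z) ≤ 1 - (2 * p - 1) ^ 2 / 2 := by
  obtain ⟨hp2, hp1⟩ := hp
  have hp0 : 0 < p := lt_trans (by norm_num) hp2
  have hc : Continuous fun z : ℝ => tp p (a * z) :=
    (continuous_tp hp0 hp1).comp (by fun_prop)
  -- integrability of T^2 z^2 φ
  have hint2 : Integrable (fun z : ℝ => tp p (a * z) ^ 2 * (z ^ 2 * phi1 z)) := by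
    refine integrable_sq_phi.mono (((hc.pow 2).mul
      ((continuous_pow 2).mul continuous_phi1)).aestronglyMeasurable) ?_
    filter_upwards with z
    have hφ := (phi1_pos z).le
    have h1 := tp_sq_le_one hp0 hp1 (a * z)
    have h0 := sq_nonneg (tp p (a * z))
    rw [Real.norm_eq_abs, Real.norm_eq_abs,
      abs_of_nonneg (mul_nonneg h0 (mul_nonneg (sq_nonneg z) hφ)),
      abs_of_nonneg (mul_nonneg (sq_nonneg z) hφ)]
    nlinarith [mul_nonneg (sq_nonneg z) hφ]
  -- split integral
  have hsplit : (∫ z : ℝ, (1 - tp p (a * z) ^ 2) * z ^ 2 * phi1 z)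
      = (∫ z : ℝ, z ^ 2 * phi1 z) - ∫ z : ℝ, tp p (a * z) ^ 2 * (z ^ 2 * phi1 z) := by
    rw [← integral_sub integrable_sq_phi hint2]
    congr 1 with z; ring
  -- lower bound on subtracted term
  have hkey : (2 * p - 1) ^ 2 / 2 ≤ ∫ z : ℝ, tp p (a * z) ^ 2 * (z ^ 2 * phi1 z) := by
    have hnonneg : 0 ≤ᵐ[volume] fun z : ℝ => tp p (a * z) ^ 2 * (z ^ 2 * phi1 z) := by
      filter_upwards with z
      exact mul_nonneg (sq_nonneg _) (mul_nonneg (sq_nonneg z) (phi1_pos z).le)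
    have h1 : (∫ z in Ioi (0:ℝ), tp p (a * z) ^ 2 * (z ^ 2 * phi1 z))
        ≤ ∫ z : ℝ, tp p (a * z) ^ 2 * (z ^ 2 * phi1 z) :=
      setIntegral_le_integral hint2 hnonneg
    have h2 : (∫ z in Ioi (0:ℝ), (2 * p - 1) ^ 2 * (z ^ 2 * phi1 z))
        ≤ ∫ z in Ioi (0:ℝ), tp p (a * z) ^ 2 * (z ^ 2 * phi1 z) := by
      refine setIntegral_mono_on ((integrable_sq_phi.const_mul _).integrableOn)
        hint2.integrableOn measurableSet_Ioi ?_
      intro z hz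
      have hz0 : (0:ℝ) < z := hz
      have hle : tp p 0 ≤ tp p (a * z) := tp_mono hp0 hp1 (by positivity)
      rw [tp_zero hp0 hp1] at hle
      have h2p : (0:ℝ) ≤ 2 * p - 1 := by linarith
      have := pow_le_pow_left₀ h2p hle 2
      exact mul_le_mul_of_nonneg_right this (mul_nonneg (sq_nonneg z) (phi1_pos z).le)
    have h3 : (∫ z in Ioi (0:ℝ), (2 * p - 1) ^ 2 * (z ^ 2 * phi1 z))
        = (2 * p - 1) ^ 2 / 2 := by
      rw [integral_const_mul, integral_Ioi_sq_phi]; ring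
    linarith
  rw [hsplit, integral_sq_phi]
  linarith

end AuxProof

/-- upper bound on the derivative of `m`. -/
theorem m_deriv_upper_bound
    (p : ℝ) (hp : p ∈ Set.Ioo (1 / 2 : ℝ) 1) (d : ℕ) (hd : 1 ≤ d)
    (θ : ℝ) (hθ : 0 < θ) (hθd : θ < Real.sqrt d) :
    ∃ m' : ℝ, HasDerivAt (m p d) m' θ ∧
      m' ≤ (1 + θ ^ 2 / d) / (1 - θ ^ 2 / d) ^ 2 * (1 - (2 * p - 1) ^ 2 / 2) := by
  obtain ⟨hp2, hp1⟩ := hp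
  have hp0 : 0 < p := lt_trans (by norm_num) hp2
  have hd0 : (0:ℝ) < (d:ℝ) := by exact_mod_cast Nat.lt_of_lt_of_le Nat.zero_lt_one hd
  have hθ2 : θ ^ 2 < (d:ℝ) := by
    have := pow_lt_pow_left₀ hθd hθ.le two_ne_zero
    rwa [Real.sq_sqrt hd0.le] at this
  have hν : 0 < 1 - θ ^ 2 / (d:ℝ) := by
    rw [sub_pos, div_lt_one hd0]; exact hθ2
  set α : ℝ → ℝ := fun t => t / (1 - t ^ 2 / (d:ℝ)) with hαdef
  have hαθ : 0 < α θ := div_pos hθ hν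
  -- derivative of α
  have hden : HasDerivAt (fun t : ℝ => 1 - t ^ 2 / (d:ℝ)) (-(2 * θ / (d:ℝ))) θ := by
    have := ((hasDerivAt_pow 2 θ).div_const (d:ℝ)).const_sub 1
    exact this.congr_deriv (by norm_num)
  have hα : HasDerivAt α ((1 + θ ^ 2 / d) / (1 - θ ^ 2 / d) ^ 2) θ := by
    have := (hasDerivAt_id θ).div hden (ne_of_gt hν)
    exact this.congr_deriv (by simp only [id]; ring)
  -- m = F ∘ α
  have hmF : m p d = (fun t => ∫ z : ℝ, tp p (α t * z) * z * phi1 z) := by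
    funext t
    rw [m, gexp]
    congr 1 with z
    rw [hαdef, div_mul_eq_mul_div]
  have hF := hasDerivAt_F hp0 hp1 (α θ)
  have hcomp := hF.comp θ hα
  have hcomp2 : HasDerivAt (fun t => ∫ z : ℝ, tp p (α t * z) * z * phi1 z)
      ((∫ z : ℝ, (1 - tp p (α θ * z) ^ 2) * z ^ 2 * phi1 z)
        * ((1 + θ ^ 2 / (d:ℝ)) / (1 - θ ^ 2 / (d:ℝ)) ^ 2)) θ := hcomp
  rw [← hmF] at hcomp2
  refine ⟨_, hcomp2, ?_⟩
  have hFle := Fderiv_le ⟨hp2, hp1⟩ hαθ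
  have hα' : 0 ≤ (1 + θ ^ 2 / (d:ℝ)) / (1 - θ ^ 2 / (d:ℝ)) ^ 2 := by positivity
  calc (∫ z : ℝ, (1 - tp p (α θ * z) ^ 2) * z ^ 2 * phi1 z)
        * ((1 + θ ^ 2 / ↑d) / (1 - θ ^ 2 / ↑d) ^ 2)
      ≤ (1 - (2 * p - 1) ^ 2 / 2) * ((1 + θ ^ 2 / ↑d) / (1 - θ ^ 2 / ↑d) ^ 2) :=
        mul_le_mul_of_nonneg_right hFle hα'
    _ = (1 + θ ^ 2 / ↑d) / (1 - θ ^ 2 / ↑d) ^ 2 * (1 - (2 * p - 1) ^ 2 / 2) := by ring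

end OMDA
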